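/- arXiv:2106.00773 — 2 statements merged into one kernel-verified Lean document; each statement's English description precedes it below -/
import Mathlib

section
/- Let R > 1 and let F: ℂ → ℂ be infinitely real-differentiable on the disc D(0,R). Then for all integers k, N with 1 ≤ k ≤ N, ∫_𝔻 (1 − |z|²)^{k−1} · F(z) · z^{N−k+1} dm₂(z) = (1/k) · ∫_𝔻 (1 − |z|²)^{k} · z^{N−k} · ∂̄F(z) dm₂(z), where ∂̄F = (1/2)(∂F/∂x + i·∂F/∂y) and the integrals are over the open unit disc 𝔻 with respect to 2-dimensional Lebesgue measure m₂. -/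
open Complex Metric Set MeasureTheory
open scoped ComplexConjugate Real Topology

noncomputable def wbar (f : ℂ → ℂ) (z : ℂ) : ℂ :=
  (1 / 2) * (fderiv ℝ f z 1 + Complex.I * fderiv ℝ f z Complex.I)

noncomputable def wd (f : ℂ → ℂ) (z : ℂ) : ℂ :=
  (1 / 2) * (fderiv ℝ f z 1 - Complex.I * fderiv ℝ f z Complex.I)

/-- `f` is `L_τ`-analytic on `U`: twice continuously real differentiable and
`∂̄(∂̄ + τ∂)f = 0` on `U`. -/
def LtauAnalyticOn (τ : ℝ) (f : ℂ → ℂ) (U : Set ℂ) : Prop :=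
  ContDiffOn ℝ 2 f U ∧ ∀ z ∈ U, wbar (fun w => wbar f w + (τ : ℂ) * wd f w) z = 0

noncomputable def supAbsOn (f : ℂ → ℂ) (K : Set ℂ) : ℝ :=
  ⨆ z : K, ‖f z.1‖

def IsJordanCurve (Γ : Set ℂ) : Prop :=
  ∃ w : ℝ → ℂ, ContinuousOn w (Set.Icc 0 1) ∧ Set.InjOn w (Set.Ico 0 1) ∧
    w 0 = w 1 ∧ Γ = w '' Set.Icc 0 1

/-- `G` is the bounded connected component of the complement of the Jordan curve `Γ`
(so that `∂G = Γ`). -/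
def IsJordanDomain (G Γ : Set ℂ) : Prop :=
  IsJordanCurve Γ ∧ Bornology.IsBounded G ∧
    (∃ z ∈ Γᶜ, G = connectedComponentIn Γᶜ z) ∧ frontier G = Γ

/-- `w` is a `C^{1,α}` parametrization of the Jordan curve `Γ`, with derivative `w'`. -/
def IsC1aParam (α : ℝ) (Γ : Set ℂ) (w w' : ℝ → ℂ) : Prop :=
  Γ = w '' Set.Icc 0 1 ∧ Set.InjOn w (Set.Ico 0 1) ∧ w 0 = w 1 ∧
  (∀ ξ ∈ Set.Icc (0:ℝ) 1, HasDerivWithinAt w (w' ξ) (Set.Icc 0 1) ξ) ∧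
  ContinuousOn w' (Set.Icc 0 1) ∧ (∀ ξ ∈ Set.Icc (0:ℝ) 1, w' ξ ≠ 0) ∧
  ∃ C > 0, ∀ ξ₁ ∈ Set.Icc (0:ℝ) 1, ∀ ξ₂ ∈ Set.Icc (0:ℝ) 1,
    ‖w' ξ₁ - w' ξ₂‖ ≤ C * |ξ₁ - ξ₂| ^ α

def IsC1aJordanCurve (α : ℝ) (Γ : Set ℂ) : Prop :=
  ∃ w w' : ℝ → ℂ, IsC1aParam α Γ w w'

/-- The tangent line to the `C^{1,α}` curve `Γ` at the origin is the real axis. -/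
def RealTangentAtZero (α : ℝ) (Γ : Set ℂ) : Prop :=
  ∃ w w' : ℝ → ℂ, IsC1aParam α Γ w w' ∧
    ∃ ξ₀ ∈ Set.Icc (0:ℝ) 1, w ξ₀ = 0 ∧ (w' ξ₀).im = 0

/-- `φ` is a conformal map of the open unit disc onto `G`. -/
def ConformalOfDisc (φ : ℂ → ℂ) (G : Set ℂ) : Prop :=
  DifferentiableOn ℂ φ (Metric.ball (0:ℂ) 1) ∧ Set.InjOn φ (Metric.ball (0:ℂ) 1) ∧
    φ '' Metric.ball (0:ℂ) 1 = G

/-- `φ` (already extended) is a homeomorphism of the closed unit disc onto `closure G`. -/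
def HomeoExtension (φ : ℂ → ℂ) (G : Set ℂ) : Prop :=
  ContinuousOn φ (Metric.closedBall (0:ℂ) 1) ∧ Set.InjOn φ (Metric.closedBall (0:ℂ) 1) ∧
    φ '' Metric.closedBall (0:ℂ) 1 = closure G

section helpers


lemma ftc_line {R : ℝ} (hR : 1 < R) {G : ℂ → ℂ} (hG : ContDiffOn ℝ 1 G (Metric.ball 0 R))
    (hb : ∀ z : ℂ, ‖z‖ = 1 → G z = 0)
    (v : ℂ) (ℓ : ℝ → ℂ) (c : ℝ)
    (hd : ∀ x : ℝ, HasDerivAt ℓ v x)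
    (hn : ∀ x : ℝ, ‖ℓ x‖ ^ 2 = c ^ 2 + x ^ 2) :
    ∫ x in Set.Ioo (-(Real.sqrt (1 - c^2))) (Real.sqrt (1 - c^2)), fderiv ℝ G (ℓ x) v = 0 := by
  set s := Real.sqrt (1 - c^2) with hs
  rcases le_or_gt (1 - c^2) 0 with h1 | h1
  · have : s = 0 := Real.sqrt_eq_zero_of_nonpos h1
    rw [this]
    simp
  · have hs0 : 0 < s := Real.sqrt_pos.2 h1
    have hs2 : s ^ 2 = 1 - c ^ 2 := Real.sq_sqrt h1.le
    have hmem : ∀ x ∈ Set.uIcc (-s) s, ℓ x ∈ Metric.ball (0:ℂ) R := by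
      intro x hx
      rw [Set.uIcc_of_le (by linarith)] at hx
      have hx2 : x ^ 2 ≤ s ^ 2 := by nlinarith [hx.1, hx.2]
      have : ‖ℓ x‖ ^ 2 ≤ 1 := by rw [hn]; nlinarith
      have habs : ‖ℓ x‖ ≤ 1 := by nlinarith [norm_nonneg (ℓ x)]
      rw [Metric.mem_ball, Complex.dist_eq, sub_zero]
      linarith
    have hder : ∀ x ∈ Set.uIcc (-s) s,
        HasDerivAt (fun x => G (ℓ x)) (fderiv ℝ G (ℓ x) v) x := by
      intro x hx
      have hz := hmem x hx
      have hdG : HasFDerivAt G (fderiv ℝ G (ℓ x)) (ℓ x) :=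
        (((hG.contDiffAt (isOpen_ball.mem_nhds hz)).differentiableAt one_ne_zero).hasFDerivAt)
      exact hdG.comp_hasDerivAt x (hd x)
    have hℓ : Continuous ℓ := by
      rw [continuous_iff_continuousAt]; exact fun x => (hd x).continuousAt
    have hcont : ContinuousOn (fun x => fderiv ℝ G (ℓ x) v) (Set.uIcc (-s) s) := by
      have h1' : ContinuousOn (fderiv ℝ G) (Metric.ball 0 R) :=
        hG.continuousOn_fderiv_of_isOpen isOpen_ball le_rfl
      exact (ContinuousLinearMap.apply ℝ ℂ v).continuous.comp_continuousOn
        (h1'.comp hℓ.continuousOn hmem)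
    have hii : IntervalIntegrable (fun x => fderiv ℝ G (ℓ x) v) volume (-s) s :=
      hcont.intervalIntegrable
    have hftc := intervalIntegral.integral_eq_sub_of_hasDerivAt hder hii
    have habs1 : ∀ x : ℝ, x ^ 2 = s ^ 2 → G (ℓ x) = 0 := by
      intro x hx
      apply hb
      have : ‖ℓ x‖ ^ 2 = 1 := by rw [hn]; nlinarith
      nlinarith [norm_nonneg (ℓ x)]
    rw [← MeasureTheory.integral_Ioc_eq_integral_Ioo,
      ← intervalIntegral.integral_of_le (by linarith : -s ≤ s), hftc,
      habs1 s rfl, habs1 (-s) (by ring), sub_zero]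

lemma fubini_yx (f : ℂ → ℂ) (hf : Integrable f volume) :
    ∫ z, f z = ∫ y : ℝ, ∫ x : ℝ, f ((x:ℂ) + (y:ℂ) * Complex.I) := by
  rw [← (Complex.volume_preserving_equiv_real_prod.symm).integral_comp
    Complex.measurableEquivRealProd.symm.measurableEmbedding f]
  have hf2 : Integrable (f ∘ Complex.measurableEquivRealProd.symm) volume := by
    rw [(Complex.volume_preserving_equiv_real_prod.symm).integrable_comp_emb
      Complex.measurableEquivRealProd.symm.measurableEmbedding]
    exact hf
  rw [Measure.volume_eq_prod] at hf2 ⊢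
  rw [show (∫ (x : ℝ × ℝ), f (Complex.measurableEquivRealProd.symm x) ∂(volume.prod volume))
    = ∫ p, (f ∘ Complex.measurableEquivRealProd.symm) p ∂(volume.prod volume) from rfl,
    MeasureTheory.integral_prod_symm _ hf2]
  simp only [Function.comp, Complex.measurableEquivRealProd_symm_apply, Complex.mk_eq_add_mul_I]

lemma fubini_xy (f : ℂ → ℂ) (hf : Integrable f volume) :
    ∫ z, f z = ∫ x : ℝ, ∫ y : ℝ, f ((x:ℂ) + (y:ℂ) * Complex.I) := by
  rw [← (Complex.volume_preserving_equiv_real_prod.symm).integral_comp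
    Complex.measurableEquivRealProd.symm.measurableEmbedding f]
  have hf2 : Integrable (f ∘ Complex.measurableEquivRealProd.symm) volume := by
    rw [(Complex.volume_preserving_equiv_real_prod.symm).integrable_comp_emb
      Complex.measurableEquivRealProd.symm.measurableEmbedding]
    exact hf
  rw [Measure.volume_eq_prod] at hf2 ⊢
  rw [show (∫ (x : ℝ × ℝ), f (Complex.measurableEquivRealProd.symm x) ∂(volume.prod volume))
    = ∫ p, (f ∘ Complex.measurableEquivRealProd.symm) p ∂(volume.prod volume) from rfl,
    MeasureTheory.integral_prod _ hf2]
  simp only [Function.comp, Complex.measurableEquivRealProd_symm_apply, Complex.mk_eq_add_mul_I]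

lemma habs2 (x y : ℝ) : ‖(x:ℂ) + (y:ℂ) * Complex.I‖ ^ 2 = x ^ 2 + y ^ 2 := by
  rw [Complex.sq_norm]
  simp [Complex.normSq_apply]
  ring

lemma slice_x (y : ℝ) : (fun x : ℝ => (x:ℂ) + (y:ℂ) * Complex.I) ⁻¹' (Metric.ball 0 1)
    = Set.Ioo (-(Real.sqrt (1 - y^2))) (Real.sqrt (1 - y^2)) := by
  ext x
  simp only [Set.mem_preimage, mem_ball_zero_iff, Set.mem_Ioo]
  rw [← abs_lt, Real.lt_sqrt (abs_nonneg x), _root_.sq_abs]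
  constructor
  · intro h
    have h2 := habs2 x y
    nlinarith [norm_nonneg ((x:ℂ) + y*Complex.I)]
  · intro h
    nlinarith [habs2 x y, norm_nonneg ((x:ℂ) + y*Complex.I)]

lemma slice_y (x : ℝ) : (fun y : ℝ => (x:ℂ) + (y:ℂ) * Complex.I) ⁻¹' (Metric.ball 0 1)
    = Set.Ioo (-(Real.sqrt (1 - x^2))) (Real.sqrt (1 - x^2)) := by
  ext y
  simp only [Set.mem_preimage, mem_ball_zero_iff, Set.mem_Ioo]
  rw [← abs_lt, Real.lt_sqrt (abs_nonneg y), _root_.sq_abs]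
  constructor
  · intro h
    nlinarith [habs2 x y, norm_nonneg ((x:ℂ) + y*Complex.I)]
  · intro h
    nlinarith [habs2 x y, norm_nonneg ((x:ℂ) + y*Complex.I)]

lemma hd_x (y : ℝ) (x : ℝ) : HasDerivAt (fun x : ℝ => (x:ℂ) + (y:ℂ) * Complex.I) 1 x := by
  simpa using (Complex.ofRealCLM.hasDerivAt (x := x)).add_const ((y:ℂ) * Complex.I)

lemma hd_y (x : ℝ) (y : ℝ) : HasDerivAt (fun y : ℝ => (x:ℂ) + (y:ℂ) * Complex.I) Complex.I y := by
  simpa using ((Complex.ofRealCLM.hasDerivAt (x := y)).mul_const Complex.I).const_add (x:ℂ)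

lemma integrableOn_ball_of_continuousOn {R : ℝ} (hR : 1 < R) {g : ℂ → ℂ}
    (hg : ContinuousOn g (Metric.ball 0 R)) :
    IntegrableOn g (Metric.ball (0:ℂ) 1) := by
  have hsub : Metric.closedBall (0:ℂ) 1 ⊆ Metric.ball 0 R :=
    Metric.closedBall_subset_ball hR
  exact ((hg.mono hsub).integrableOn_compact (isCompact_closedBall 0 1)).mono_set
    Metric.ball_subset_closedBall

lemma integral_fderiv_ball_zero {R : ℝ} (hR : 1 < R) {G : ℂ → ℂ}
    (hG : ContDiffOn ℝ 1 G (Metric.ball 0 R))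
    (hb : ∀ z : ℂ, ‖z‖ = 1 → G z = 0) (v : ℂ) (hv : v = 1 ∨ v = Complex.I) :
    ∫ z in Metric.ball (0:ℂ) 1, fderiv ℝ G z v = 0 := by
  have hcont : ContinuousOn (fun z => fderiv ℝ G z v) (Metric.ball 0 R) :=
    (ContinuousLinearMap.apply ℝ ℂ v).continuous.comp_continuousOn
      (hG.continuousOn_fderiv_of_isOpen isOpen_ball le_rfl)
  have hio : IntegrableOn (fun z => fderiv ℝ G z v) (Metric.ball (0:ℂ) 1) :=
    integrableOn_ball_of_continuousOn hR hcont
  have hind : Integrable ((Metric.ball (0:ℂ) 1).indicator (fun z => fderiv ℝ G z v)) volume :=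
    (integrable_indicator_iff measurableSet_ball).2 hio
  rw [← MeasureTheory.integral_indicator measurableSet_ball]
  rcases hv with rfl | rfl
  · rw [fubini_yx _ hind]
    have key : ∀ y : ℝ, (∫ x : ℝ, (Metric.ball (0:ℂ) 1).indicator
        (fun z => fderiv ℝ G z 1) ((x:ℂ) + (y:ℂ)*Complex.I)) = 0 := by
      intro y
      have h1 : ∀ x:ℝ, (Metric.ball (0:ℂ) 1).indicator (fun z => fderiv ℝ G z 1)
            ((x:ℂ) + (y:ℂ)*Complex.I)
          = ((fun x : ℝ => (x:ℂ) + (y:ℂ)*Complex.I) ⁻¹' (Metric.ball 0 1)).indicator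
            ((fun z => fderiv ℝ G z 1) ∘ (fun x : ℝ => (x:ℂ) + (y:ℂ)*Complex.I)) x :=
        fun x => (Set.indicator_comp_right _).symm
      simp_rw [h1, slice_x y]
      rw [MeasureTheory.integral_indicator measurableSet_Ioo]
      exact ftc_line hR hG hb 1 _ y (hd_x y) (fun x => by rw [habs2 x y]; ring)
    simp_rw [key, integral_zero]
  · rw [fubini_xy _ hind]
    have key : ∀ x : ℝ, (∫ y : ℝ, (Metric.ball (0:ℂ) 1).indicator
        (fun z => fderiv ℝ G z Complex.I) ((x:ℂ) + (y:ℂ)*Complex.I)) = 0 := by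
      intro x
      have h1 : ∀ y:ℝ, (Metric.ball (0:ℂ) 1).indicator (fun z => fderiv ℝ G z Complex.I)
            ((x:ℂ) + (y:ℂ)*Complex.I)
          = ((fun y : ℝ => (x:ℂ) + (y:ℂ)*Complex.I) ⁻¹' (Metric.ball 0 1)).indicator
            ((fun z => fderiv ℝ G z Complex.I) ∘ (fun y : ℝ => (x:ℂ) + (y:ℂ)*Complex.I)) y :=
        fun y => (Set.indicator_comp_right _).symm
      simp_rw [h1, slice_y x]
      rw [MeasureTheory.integral_indicator measurableSet_Ioo]
      exact ftc_line hR hG hb Complex.I _ x (hd_y x) (fun y => by rw [habs2 x y])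
    simp_rw [key, integral_zero]

lemma wbar_mul (f g : ℂ → ℂ) (z : ℂ) (hf : DifferentiableAt ℝ f z)
    (hg : DifferentiableAt ℝ g z) :
    wbar (fun w => f w * g w) z = wbar f z * g z + f z * wbar g z := by
  unfold wbar
  rw [fderiv_fun_mul hf hg]
  simp only [ContinuousLinearMap.add_apply, ContinuousLinearMap.smul_apply, smul_eq_mul]
  ring

lemma wbar_of_holomorphic {f : ℂ → ℂ} {z : ℂ} (h : DifferentiableAt ℂ f z) : wbar f z = 0 := by
  unfold wbar
  rw [h.fderiv_restrictScalars ℝ]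
  have h1 : (fderiv ℂ f z).restrictScalars ℝ Complex.I
      = Complex.I * (fderiv ℂ f z).restrictScalars ℝ 1 := by
    show fderiv ℂ f z Complex.I = Complex.I * fderiv ℂ f z 1
    simpa [smul_eq_mul] using (fderiv ℂ f z).map_smul Complex.I 1
  rw [h1]
  ring_nf
  rw [Complex.I_sq]
  ring

lemma wbar_conj (z : ℂ) : wbar (fun w => (starRingEnd ℂ) w) z = 1 := by
  unfold wbar
  have h : HasFDerivAt (fun w : ℂ => (starRingEnd ℂ) w)
      (Complex.conjCLE.toContinuousLinearMap) z := Complex.conjCLE.hasFDerivAt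
  rw [h.fderiv]
  simp [Complex.conjCLE_apply, Complex.conj_I]
  ring_nf

lemma diff_conj (z : ℂ) : DifferentiableAt ℝ (fun w : ℂ => (starRingEnd ℂ) w) z :=
  Complex.conjCLE.differentiableAt

lemma wbar_A (z : ℂ) : wbar (fun w : ℂ => 1 - w * (starRingEnd ℂ) w) z = -z := by
  have h1 : wbar (fun w : ℂ => w * (starRingEnd ℂ) w) z = z := by
    rw [wbar_mul _ _ z differentiableAt_fun_id (diff_conj z), wbar_conj,
      wbar_of_holomorphic differentiableAt_fun_id]
    simp
  have h2 : (fun w : ℂ => 1 - w * (starRingEnd ℂ) w)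
      = fun w : ℂ => (1:ℂ) + (-1) * (w * (starRingEnd ℂ) w) := by funext w; ring
  rw [h2]
  unfold wbar at h1 ⊢
  rw [fderiv_const_add, fderiv_const_mul (differentiableAt_fun_id.fun_mul (diff_conj z))]
  simp only [ContinuousLinearMap.smul_apply, smul_eq_mul] at h1 ⊢
  ring_nf at h1 ⊢
  linear_combination -h1

lemma diff_A (z : ℂ) : DifferentiableAt ℝ (fun w : ℂ => 1 - w * (starRingEnd ℂ) w) z :=
  (differentiableAt_const _).sub (differentiableAt_fun_id.fun_mul (diff_conj z))

lemma wbar_pow (A : ℂ → ℂ) (hA : ∀ w, DifferentiableAt ℝ A w) (n : ℕ) (z : ℂ) :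
    wbar (fun w => A w ^ n) z = n * A z ^ (n-1) * wbar A z := by
  induction n with
  | zero =>
      simp only [pow_zero, Nat.cast_zero, zero_mul]
      have : wbar (fun _ : ℂ => (1:ℂ)) z = 0 := by unfold wbar; simp
      simpa using this
  | succ n ih =>
      have h1 : (fun w => A w ^ (n+1)) = fun w => A w ^ n * A w := by
        funext w; rw [pow_succ]
      rw [h1, wbar_mul _ _ z ((hA z).fun_pow n) (hA z), ih]
      cases n with
      | zero => simp
      | succ m =>
          rw [pow_succ]
          push_cast
          ring

lemma wbar_G_formula (F : ℂ → ℂ) (k mm : ℕ) (z : ℂ) (hdFz : DifferentiableAt ℝ F z) :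
    wbar (fun w => (1 - w * (starRingEnd ℂ) w) ^ k * w ^ mm * F w) z =
      (k:ℂ) * (1 - z * (starRingEnd ℂ) z) ^ (k-1) * (-z) * z ^ mm * F z
      + (1 - z * (starRingEnd ℂ) z) ^ k * z ^ mm * wbar F z := by
  have hdAk : DifferentiableAt ℝ (fun w : ℂ => (1 - w * (starRingEnd ℂ) w) ^ k) z :=
    (diff_A z).fun_pow k
  have hdzm : DifferentiableAt ℝ (fun w : ℂ => w ^ mm) z := differentiableAt_fun_id.fun_pow mm
  have e0 : (fun w : ℂ => (1 - w * (starRingEnd ℂ) w) ^ k * w ^ mm * F w)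
      = fun w => ((fun w : ℂ => (1 - w * (starRingEnd ℂ) w) ^ k * w ^ mm) w) * F w := rfl
  rw [e0, wbar_mul _ F z (hdAk.fun_mul hdzm) hdFz,
     wbar_mul _ _ z hdAk hdzm, wbar_of_holomorphic (differentiableAt_pow mm),
     wbar_pow _ diff_A k z, wbar_A z]
  ring

end helpers

/-- the Green-formula identity of Lemma `lem-green`. -/
theorem stmt8 (R : ℝ) (hR : 1 < R) (F : ℂ → ℂ)
    (hF : ContDiffOn ℝ (⊤ : ℕ∞) F (Metric.ball (0:ℂ) R)) (k N : ℕ) (hk : 1 ≤ k) (hkN : k ≤ N) :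
    (∫ z in Metric.ball (0:ℂ) 1,
        ((1 - ‖z‖ ^ 2 : ℝ) : ℂ) ^ (k - 1) * F z * z ^ (N - k + 1)) =
      (1 / (k : ℂ)) * ∫ z in Metric.ball (0:ℂ) 1,
        ((1 - ‖z‖ ^ 2 : ℝ) : ℂ) ^ k * z ^ (N - k) * wbar F z := by
  have hsub1R : Metric.ball (0:ℂ) 1 ⊆ Metric.ball 0 R := Metric.ball_subset_ball hR.le
  have hAabs : ∀ w : ℂ, (1:ℂ) - w * (starRingEnd ℂ) w = ((1 - ‖w‖ ^ 2 : ℝ) : ℂ) := by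
    intro w
    rw [Complex.mul_conj, ← Complex.sq_norm]
    push_cast
    ring
  set G : ℂ → ℂ := fun w => (1 - w * (starRingEnd ℂ) w) ^ k * w ^ (N - k) * F w with hGdef
  have hconjC : ContDiff ℝ (⊤ : ℕ∞) (fun w : ℂ => (starRingEnd ℂ) w) :=
    Complex.conjCLE.toContinuousLinearMap.contDiff
  have hGc : ContDiffOn ℝ 1 G (Metric.ball 0 R) := by
    apply ContDiffOn.mul _ (hF.of_le (by simp))
    exact ((((contDiff_const.sub (contDiff_id.mul hconjC)).pow k).mul
      (contDiff_id.pow (N - k))).of_le (by simp)).contDiffOn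
  have hGb : ∀ z : ℂ, ‖z‖ = 1 → G z = 0 := by
    intro z hz
    have h0 : (1:ℂ) - z * (starRingEnd ℂ) z = 0 := by rw [hAabs, hz]; norm_num
    simp [hGdef, h0, zero_pow (by omega : k ≠ 0)]
  -- continuity facts
  have hdFc : ContinuousOn (fderiv ℝ F) (Metric.ball 0 R) :=
    hF.continuousOn_fderiv_of_isOpen isOpen_ball (by simp)
  have hwFc : ContinuousOn (fun z => wbar F z) (Metric.ball 0 R) := by
    have h1 : ContinuousOn (fun z => fderiv ℝ F z 1) (Metric.ball 0 R) :=
      (ContinuousLinearMap.apply ℝ ℂ 1).continuous.comp_continuousOn hdFc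
    have h2 : ContinuousOn (fun z => fderiv ℝ F z Complex.I) (Metric.ball 0 R) :=
      (ContinuousLinearMap.apply ℝ ℂ Complex.I).continuous.comp_continuousOn hdFc
    exact continuousOn_const.mul (h1.add (continuousOn_const.mul h2))
  have hcq : Continuous (fun z : ℂ => ((1 - ‖z‖ ^ 2 : ℝ) : ℂ)) :=
    Complex.continuous_ofReal.comp (continuous_const.sub (continuous_norm.pow 2))
  have hic1 : IntegrableOn (fun z : ℂ =>
      ((1 - ‖z‖ ^ 2 : ℝ) : ℂ) ^ (k - 1) * F z * z ^ (N - k + 1))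
      (Metric.ball (0:ℂ) 1) := by
    apply integrableOn_ball_of_continuousOn hR
    exact (((hcq.pow (k-1)).continuousOn.mul hF.continuousOn).mul
      (continuous_pow (N - k + 1)).continuousOn)
  have hic2 : IntegrableOn (fun z : ℂ =>
      ((1 - ‖z‖ ^ 2 : ℝ) : ℂ) ^ k * z ^ (N - k) * wbar F z)
      (Metric.ball (0:ℂ) 1) := by
    apply integrableOn_ball_of_continuousOn hR
    exact (((hcq.pow k).mul (continuous_pow (N - k))).continuousOn).mul hwFc
  -- the integral of wbar G over the disc vanishes
  have hGder : ContinuousOn (fderiv ℝ G) (Metric.ball 0 R) :=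
    hGc.continuousOn_fderiv_of_isOpen isOpen_ball le_rfl
  have hio1 : IntegrableOn (fun z => fderiv ℝ G z 1) (Metric.ball (0:ℂ) 1) :=
    integrableOn_ball_of_continuousOn hR
      ((ContinuousLinearMap.apply ℝ ℂ 1).continuous.comp_continuousOn hGder)
  have hioI : IntegrableOn (fun z => fderiv ℝ G z Complex.I) (Metric.ball (0:ℂ) 1) :=
    integrableOn_ball_of_continuousOn hR
      ((ContinuousLinearMap.apply ℝ ℂ Complex.I).continuous.comp_continuousOn hGder)
  have hI1 : ∫ z in Metric.ball (0:ℂ) 1, fderiv ℝ G z 1 = 0 :=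
    integral_fderiv_ball_zero hR hGc hGb 1 (Or.inl rfl)
  have hI2 : ∫ z in Metric.ball (0:ℂ) 1, fderiv ℝ G z Complex.I = 0 :=
    integral_fderiv_ball_zero hR hGc hGb Complex.I (Or.inr rfl)
  have h0 : (∫ z in Metric.ball (0:ℂ) 1, wbar G z) = 0 := by
    have hfun : (fun z => wbar G z) = fun z =>
        (1/2 : ℂ) * fderiv ℝ G z 1 + (Complex.I/2) * fderiv ℝ G z Complex.I := by
      funext z; unfold wbar; ring
    rw [hfun, MeasureTheory.integral_add (hio1.const_mul _) (hioI.const_mul _),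
      MeasureTheory.integral_const_mul, MeasureTheory.integral_const_mul, hI1, hI2]
    ring
  -- pointwise formula for wbar G
  have hGform : ∀ z ∈ Metric.ball (0:ℂ) 1, wbar G z =
      -(k:ℂ) * (((1 - ‖z‖ ^ 2 : ℝ) : ℂ) ^ (k - 1) * F z * z ^ (N - k + 1))
      + ((1 - ‖z‖ ^ 2 : ℝ) : ℂ) ^ k * z ^ (N - k) * wbar F z := by
    intro z hz
    have hzR : z ∈ Metric.ball (0:ℂ) R := hsub1R hz
    have hdFz : DifferentiableAt ℝ F z :=
      (hF.contDiffAt (isOpen_ball.mem_nhds hzR)).differentiableAt (by simp)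
    rw [hGdef, wbar_G_formula F k (N - k) z hdFz, hAabs z]
    rw [pow_succ]
    ring
  have hsplit : (∫ z in Metric.ball (0:ℂ) 1, wbar G z) =
      -(k:ℂ) * (∫ z in Metric.ball (0:ℂ) 1,
        ((1 - ‖z‖ ^ 2 : ℝ) : ℂ) ^ (k - 1) * F z * z ^ (N - k + 1))
      + ∫ z in Metric.ball (0:ℂ) 1,
        ((1 - ‖z‖ ^ 2 : ℝ) : ℂ) ^ k * z ^ (N - k) * wbar F z := by
    rw [MeasureTheory.setIntegral_congr_fun measurableSet_ball hGform,
      MeasureTheory.integral_add (hic1.const_mul _) hic2,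
      MeasureTheory.integral_const_mul]
  rw [hsplit] at h0
  have hk0 : (k:ℂ) ≠ 0 := Nat.cast_ne_zero.2 (by omega)
  rw [one_div, eq_inv_mul_iff_mul_eq₀ hk0]
  linear_combination -h0
end

section
/- Let α ∈ (0,1) and τ₁ ∈ (0,1). There exists a constant C > 0 (depending only on α and τ₁, or even absolute) such that for every integer n ≥ 2, ∑_{k=1}^{n−1} k·τ₁^k / (n−k)^α ≤ C · ( 1/n^{α/2} + n^{α/4}·τ₁^{n^{α/4}} / (1 − τ₁) + τ₁^{n^{α/4}+1} / (1 − τ₁)² ), where τ₁^{n^{α/4}} denotes the real power τ₁ raised to the exponent n^{α/4}. -/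
open Complex Metric Set MeasureTheory
open scoped ComplexConjugate Real Topology

/-!
Since `x / (x - y) ≤ y + 1` whenever `0 ≤ y` and `y + 1 ≤ x`, and `t ^ α ≤ t` for `t ≥ 1`,
`α ≤ 1`, each term satisfies `k τ₁ ^ k / (n - k) ^ α ≤ k (k + 1) τ₁ ^ k / n ^ α`. The whole sum is
therefore at most `(∑ k (k + 1) τ₁ ^ k) / n ^ α ≤ C / n ^ (α / 2)`, and the two remaining terms
of the bound are nonnegative.
-/

open Finset

lemma div_sub_le_add_one {x y : ℝ} (hy : 0 ≤ y) (hyx : y + 1 ≤ x) : x / (x - y) ≤ y + 1 := by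
  rw [div_le_iff₀ (by linarith)]
  nlinarith

lemma one_div_rpow_sub_le {x y α : ℝ} (hy : 0 ≤ y) (hyx : y + 1 ≤ x) (hα : α ≤ 1) :
    1 / (x - y) ^ α ≤ (y + 1) / x ^ α := by
  have hxy : 1 ≤ x - y := by linarith
  have hratio : 1 ≤ x / (x - y) := by rw [le_div_iff₀ (by linarith)]; linarith
  have key : x ^ α / (x - y) ^ α ≤ y + 1 := by
    rw [← Real.div_rpow (by linarith) (by linarith)]
    exact (Real.rpow_le_self_of_one_le hratio hα).trans (div_sub_le_add_one hy hyx)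
  have hxy0 : 0 < (x - y) ^ α := Real.rpow_pos_of_pos (by linarith) α
  rw [div_le_div_iff₀ hxy0 (Real.rpow_pos_of_pos (by linarith) α), one_mul]
  rw [div_le_iff₀ hxy0] at key
  linarith

lemma sum_div_rpow_sub_le_tsum {f : ℕ → ℝ} (hf0 : ∀ k, 0 ≤ f k)
    (hf : Summable fun k : ℕ ↦ ((k : ℝ) + 1) * f k) {α : ℝ} (hα : α ≤ 1) {n : ℕ}
    {s : Finset ℕ} (hs : ∀ k ∈ s, k < n) :
    ∑ k ∈ s, f k / ((n : ℝ) - k) ^ α ≤ (∑' k : ℕ, ((k : ℝ) + 1) * f k) / (n : ℝ) ^ α := by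
  calc ∑ k ∈ s, f k / ((n : ℝ) - k) ^ α
      ≤ ∑ k ∈ s, ((k : ℝ) + 1) * f k / (n : ℝ) ^ α := by
        refine sum_le_sum fun k hk ↦ ?_
        have hkn : (k : ℝ) + 1 ≤ n := by exact_mod_cast hs k hk
        calc f k / ((n : ℝ) - k) ^ α = f k * (1 / ((n : ℝ) - k) ^ α) := by ring
          _ ≤ f k * (((k : ℝ) + 1) / (n : ℝ) ^ α) :=
            mul_le_mul_of_nonneg_left (one_div_rpow_sub_le (Nat.cast_nonneg k) hkn hα) (hf0 k)
          _ = ((k : ℝ) + 1) * f k / (n : ℝ) ^ α := by ring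
    _ = (∑ k ∈ s, ((k : ℝ) + 1) * f k) / (n : ℝ) ^ α := (sum_div _ _ _).symm
    _ ≤ (∑' k : ℕ, ((k : ℝ) + 1) * f k) / (n : ℝ) ^ α := by
        gcongr
        exact hf.sum_le_tsum _ fun k _ ↦ mul_nonneg (by positivity) (hf0 k)

lemma summable_add_one_mul_mul_geometric {τ : ℝ} (hτ0 : 0 ≤ τ) (hτ1 : τ < 1) :
    Summable fun k : ℕ ↦ ((k : ℝ) + 1) * ((k : ℝ) * τ ^ k) := by
  have hτ : ‖τ‖ < 1 := by rwa [Real.norm_of_nonneg hτ0]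
  refine ((summable_pow_mul_geometric_of_norm_lt_one 2 hτ).add
    (summable_pow_mul_geometric_of_norm_lt_one 1 hτ)).congr fun k ↦ ?_
  ring

/-- the summation estimate used in the proof of Theorem `thm-mainest`. -/
theorem stmt17 (α τ₁ : ℝ) (hα : α ∈ Set.Ioo (0:ℝ) 1) (hτ : τ₁ ∈ Set.Ioo (0:ℝ) 1) :
    ∃ C > (0:ℝ), ∀ n : ℕ, 2 ≤ n →
      ∑ k ∈ Finset.Ico 1 n, (k : ℝ) * τ₁ ^ k / ((n : ℝ) - (k : ℝ)) ^ α ≤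
        C * (1 / (n : ℝ) ^ (α / 2) +
          (n : ℝ) ^ (α / 4) * τ₁ ^ ((n : ℝ) ^ (α / 4)) / (1 - τ₁) +
          τ₁ ^ ((n : ℝ) ^ (α / 4) + 1) / (1 - τ₁) ^ 2) := by
  obtain ⟨hα0, hα1⟩ := hα
  obtain ⟨hτ0, hτ1⟩ := hτ
  have hsum := summable_add_one_mul_mul_geometric hτ0.le hτ1
  have hC : 0 < ∑' k : ℕ, ((k : ℝ) + 1) * ((k : ℝ) * τ₁ ^ k) :=
    hsum.tsum_pos (fun k ↦ by positivity) 1 (by norm_num [hτ0])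
  refine ⟨_, hC, fun n hn ↦ ?_⟩
  have hn1 : (1 : ℝ) ≤ n := by exact_mod_cast (by omega : 1 ≤ n)
  have hrest : 0 ≤ (n : ℝ) ^ (α / 4) * τ₁ ^ ((n : ℝ) ^ (α / 4)) / (1 - τ₁) +
      τ₁ ^ ((n : ℝ) ^ (α / 4) + 1) / (1 - τ₁) ^ 2 := by
    have : 0 < 1 - τ₁ := by linarith
    positivity
  have hdecay : (n : ℝ) ^ (α / 2) ≤ (n : ℝ) ^ α :=
    Real.rpow_le_rpow_of_exponent_le hn1 (by linarith)
  calc _ ≤ (∑' k : ℕ, ((k : ℝ) + 1) * ((k : ℝ) * τ₁ ^ k)) / (n : ℝ) ^ α :=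
        sum_div_rpow_sub_le_tsum (fun k ↦ by positivity) hsum hα1.le
          fun k hk ↦ (mem_Ico.mp hk).2
    _ ≤ (∑' k : ℕ, ((k : ℝ) + 1) * ((k : ℝ) * τ₁ ^ k)) * (1 / (n : ℝ) ^ (α / 2)) := by
        rw [mul_one_div]
        gcongr
    _ ≤ _ := by gcongr; linarith
end
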